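/- arXiv:1705.04551 — 3 statements merged into one kernel-verified Lean document; each statement's English description precedes it below -/
import Mathlib

section
/- Let H = S₃ × ℤ/pℤ for an odd prime p, with S₃ = ⟨a, b | a² = b² = (ab)³ = 1⟩ and ℤ/pℤ = ⟨c⟩. Suppose λ ∈ (ℤ/pℤ)* has order 4. Then the map α determined by a ↦ b, b ↦ a, c ↦ c^λ extends to an automorphism of H of order 4 which maps {ac, ac⁻¹} to {bc^λ, bc^{−λ}} and vice versa. -/
/-- The element `a`: a transposition in the `S₃` factor of `S₃ × ℤ/p`. -/
def elA (p : ℕ) : Equiv.Perm (Fin 3) × Multiplicative (ZMod p) := (Equiv.swap 0 1, 1)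

/-- The element `b`: another transposition in the `S₃` factor of `S₃ × ℤ/p`. -/
def elB (p : ℕ) : Equiv.Perm (Fin 3) × Multiplicative (ZMod p) := (Equiv.swap 0 2, 1)

/-- The element `c`: a generator of the `ℤ/p` factor of `S₃ × ℤ/p`. -/
def elC (p : ℕ) : Equiv.Perm (Fin 3) × Multiplicative (ZMod p) :=
  (1, Multiplicative.ofAdd 1)

/-- The candidate automorphism: conjugation by `swap 1 2` on the `S₃` factor,
multiplication by the unit `l` on the `ℤ/p` factor. -/
noncomputable def myAut (p : ℕ) (l : (ZMod p)ˣ) :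
    MulAut (Equiv.Perm (Fin 3) × Multiplicative (ZMod p)) :=
  MulEquiv.prodCongr (MulAut.conj (Equiv.swap 1 2))
    (AddEquiv.toMultiplicative (AddAut.mulLeft l))

lemma myAut_apply (p : ℕ) (l : (ZMod p)ˣ) (x : Equiv.Perm (Fin 3) × Multiplicative (ZMod p)) :
    myAut p l x = (Equiv.swap 1 2 * x.1 * Equiv.swap 1 2,
      Multiplicative.ofAdd ((l : ZMod p) * Multiplicative.toAdd x.2)) := rfl

lemma elC_pow (p : ℕ) (n : ℕ) : (elC p) ^ n = (1, Multiplicative.ofAdd (n : ZMod p)) := by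
  simp [elC, Prod.pow_mk, ← ofAdd_nsmul, nsmul_eq_mul]

lemma myAut_elA (p : ℕ) (l : (ZMod p)ˣ) : myAut p l (elA p) = elB p := by
  rw [myAut_apply]
  refine Prod.ext ?_ ?_
  · show Equiv.swap 1 2 * Equiv.swap 0 1 * Equiv.swap 1 2 = Equiv.swap 0 2
    decide
  · show Multiplicative.ofAdd ((l : ZMod p) * Multiplicative.toAdd (1 : Multiplicative (ZMod p))) = 1
    simp

lemma myAut_elB (p : ℕ) (l : (ZMod p)ˣ) : myAut p l (elB p) = elA p := by
  rw [myAut_apply]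
  refine Prod.ext ?_ ?_
  · show Equiv.swap 1 2 * Equiv.swap 0 2 * Equiv.swap 1 2 = Equiv.swap 0 1
    decide
  · show Multiplicative.ofAdd ((l : ZMod p) * Multiplicative.toAdd (1 : Multiplicative (ZMod p))) = 1
    simp

lemma myAut_elC (p : ℕ) [NeZero p] (l : (ZMod p)ˣ) :
    myAut p l (elC p) = (elC p) ^ ((l : ZMod p).val) := by
  rw [myAut_apply, elC_pow]
  refine Prod.ext (by simp [elC]) ?_
  show Multiplicative.ofAdd ((l : ZMod p) * Multiplicative.toAdd (Multiplicative.ofAdd (1 : ZMod p)))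
      = Multiplicative.ofAdd (((l : ZMod p).val : ZMod p))
  rw [ZMod.natCast_val, ZMod.cast_id]
  simp

theorem exists_order_four_automorphism (p : ℕ) [Fact p.Prime] (hodd : Odd p)
    (l : (ZMod p)ˣ) (hl : orderOf l = 4) :
    ∃ α : MulAut (Equiv.Perm (Fin 3) × Multiplicative (ZMod p)),
      α (elA p) = elB p ∧ α (elB p) = elA p ∧
      α (elC p) = (elC p) ^ ((l : ZMod p).val) ∧
      orderOf α = 4 ∧
      (⇑α) '' {elA p * elC p, elA p * (elC p)⁻¹} =
        {elB p * (elC p) ^ ((l : ZMod p).val),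
         elB p * ((elC p) ^ ((l : ZMod p).val))⁻¹} ∧
      (⇑α) '' {elB p * (elC p) ^ ((l : ZMod p).val),
               elB p * ((elC p) ^ ((l : ZMod p).val))⁻¹} =
        {elA p * elC p, elA p * (elC p)⁻¹} := by
  have hp : p.Prime := Fact.out
  have hp2 : p ≠ 2 := by rintro rfl; exact (Nat.not_odd_iff_even.mpr (by decide)) hodd
  have hp3 : 2 < p := lt_of_le_of_ne hp.two_le (Ne.symm hp2)
  haveI : Fact (2 < p) := ⟨hp3⟩
  set α := myAut p l with hα
  set v := (l : ZMod p).val with hv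
  -- basic facts about `l`
  have hl4 : l ^ 4 = 1 := hl ▸ pow_orderOf_eq_one l
  have h4c : (l : ZMod p) ^ 4 = 1 := by
    have := congrArg Units.val hl4; push_cast at this; exact_mod_cast this
  have hl2ne : l ^ 2 ≠ 1 := by
    intro h
    have := orderOf_dvd_of_pow_eq_one h
    rw [hl] at this
    omega
  have hl2 : (l : ZMod p) ^ 2 = -1 := by
    have hsq : ((l : ZMod p) ^ 2) * ((l : ZMod p) ^ 2) = 1 := by
      rw [← pow_add]; exact h4c
    rcases mul_self_eq_one_iff.mp hsq with h | h
    · exact absurd (Units.ext (by push_cast; exact h)) hl2ne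
    · exact h
  have hvcast : ((v : ℕ) : ZMod p) = (l : ZMod p) := by
    rw [hv, ZMod.natCast_val, ZMod.cast_id]
  -- α sends c^v to c⁻¹
  have hCv : α ((elC p) ^ v) = (elC p)⁻¹ := by
    rw [map_pow, hα, myAut_elC, ← hv, ← pow_mul, elC_pow]
    refine Prod.ext (by simp [elC]) ?_
    show Multiplicative.ofAdd (((v * v : ℕ) : ZMod p)) = (Multiplicative.ofAdd (1 : ZMod p))⁻¹
    rw [← ofAdd_neg]
    congr 1
    push_cast [hvcast]
    rw [← sq]; exact hl2
  have hCvinv : α (((elC p) ^ v)⁻¹) = elC p := by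
    rw [map_inv, hCv, inv_inv]
  -- α has order 4
  have hA4 : ∀ x, α (α (α (α x))) = x := by
    intro x
    rw [hα, myAut_apply, myAut_apply, myAut_apply, myAut_apply]
    refine Prod.ext ?_ ?_
    · show Equiv.swap 1 2 * (Equiv.swap 1 2 * (Equiv.swap 1 2 *
        (Equiv.swap 1 2 * x.1 * Equiv.swap 1 2) * Equiv.swap 1 2) * Equiv.swap 1 2) *
        Equiv.swap 1 2 = x.1
      simp [mul_assoc, ← mul_assoc (Equiv.swap 1 2) (Equiv.swap 1 2), Equiv.swap_mul_self]
    · show Multiplicative.ofAdd ((l : ZMod p) * ((l : ZMod p) * ((l : ZMod p) *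
        ((l : ZMod p) * Multiplicative.toAdd x.2)))) = x.2
      rw [← mul_assoc, ← mul_assoc, ← mul_assoc,
        show (l : ZMod p) * l * l * l = 1 by rw [← h4c]; ring, one_mul]
      simp
  have h4 : α ^ 4 = 1 := by
    refine MulEquiv.ext fun x => ?_
    have e : α ^ 4 = α * α * α * α := by
      rw [pow_succ, pow_succ, pow_succ, pow_one]
    rw [e]
    exact hA4 x
  have h2 : ¬ α ^ 2 = 1 := by
    intro h
    have : α (α (elC p)) = elC p := by
      have := congrArg (fun f : MulAut _ => f (elC p)) h
      simpa [pow_succ, pow_one] using this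
    rw [hα, myAut_elC, ← hv, ← hα, hCv] at this
    have h2nd := congrArg (fun z => Multiplicative.toAdd z.2) this
    simp [elC] at h2nd
    exact (ZMod.neg_one_ne_one h2nd)
  have horder : orderOf α = 4 := by
    have := orderOf_eq_prime_pow (x := α) (p := 2) (n := 1)
      (by norm_num; exact h2) (by norm_num; exact h4)
    simpa using this
  refine ⟨α, ?_, ?_, ?_, horder, ?_, ?_⟩
  · rw [hα]; exact myAut_elA p l
  · rw [hα]; exact myAut_elB p l
  · rw [hα]; exact myAut_elC p l
  · rw [Set.image_pair]
    congr 1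
    · rw [map_mul, hα, myAut_elA p l, myAut_elC, ← hv]
    · rw [map_mul, map_inv, hα, myAut_elA p l, myAut_elC, ← hv]
  · rw [Set.image_pair, map_mul, map_mul, hα, myAut_elB p l, ← hα, hCv, hCvinv,
      Set.pair_comm]
end

section
/- Let α be an automorphism of a group C = ⟨a,b | a²=b²=(ab)³=1⟩ × ⟨c⟩ ≅ S₃ × ℤ/pℤ (p prime) such that α maps the set {ac, ac⁻¹} onto {bc^λ, bc^{−λ}} and {bc^λ, bc^{−λ}} onto {ac, ac⁻¹}, where λ has order 4 in (ℤ/pℤ)*. Then α is not an involution. -/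
lemma cpow (p n : ℕ) : (elC p) ^ n = (1, Multiplicative.ofAdd (n : ZMod p)) := by
  simp [elC, Prod.pow_def, ← ofAdd_nsmul]

lemma sqAC (p : ℕ) : (elA p * elC p) ^ 2 = (elC p) ^ 2 := by
  simp [elA, elC, Prod.pow_def, Prod.mul_def, pow_two, Equiv.swap_mul_self]

lemma sqB (p : ℕ) (n : ℕ) : (elB p * (elC p) ^ n) ^ 2 = (elC p) ^ (2 * n) := by
  rw [cpow, cpow]
  simp [elB, Prod.pow_def, Prod.mul_def, pow_two, Equiv.swap_mul_self, two_mul]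

lemma sqB' (p : ℕ) (n : ℕ) : (elB p * ((elC p) ^ n)⁻¹) ^ 2 = ((elC p) ^ (2 * n))⁻¹ := by
  rw [cpow, cpow]
  simp [elB, Prod.pow_def, Prod.mul_def, pow_two, Equiv.swap_mul_self, two_mul]

theorem swap_automorphism_not_involution (p : ℕ) [Fact p.Prime] (hp : p % 4 = 1)
    (l : (ZMod p)ˣ) (hl : orderOf l = 4)
    (α : MulAut (Equiv.Perm (Fin 3) × Multiplicative (ZMod p)))
    (h1 : (⇑α) '' {elA p * elC p, elA p * (elC p)⁻¹} =
      {elB p * (elC p) ^ ((l : ZMod p).val),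
       elB p * ((elC p) ^ ((l : ZMod p).val))⁻¹})
    (h2 : (⇑α) '' {elB p * (elC p) ^ ((l : ZMod p).val),
                   elB p * ((elC p) ^ ((l : ZMod p).val))⁻¹} =
      {elA p * elC p, elA p * (elC p)⁻¹}) :
    α ^ 2 ≠ 1 := by
  intro hα
  set L := (l : ZMod p).val with hLdef
  have hmem : α (elA p * elC p) ∈
      ({elB p * (elC p) ^ L, elB p * ((elC p) ^ L)⁻¹} :
        Set (Equiv.Perm (Fin 3) × Multiplicative (ZMod p))) := by
    rw [← h1]; exact Set.mem_image_of_mem _ (Set.mem_insert _ _)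
  have hk : 2 * ((p + 1) / 2) = p + 1 := by omega
  have hCp : (elC p) ^ p = 1 := by rw [cpow]; simp [ZMod.natCast_self]
  have hC1 : (elC p) ^ (p + 1) = elC p := by rw [pow_succ, hCp, one_mul]
  have hCk : elC p = ((elC p) ^ 2) ^ ((p + 1) / 2) := by
    rw [← pow_mul, hk, hC1]
  have hpowL : ((elC p) ^ (2 * L)) ^ ((p + 1) / 2) = (elC p) ^ L := by
    rw [← pow_mul]
    have h2L : 2 * L * ((p + 1) / 2) = (p + 1) * L := by
      rw [mul_comm 2 L, mul_assoc, hk, mul_comm]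
    rw [h2L, pow_mul, hC1]
  have key : α ((elC p) ^ 2) = (elC p) ^ (2 * L) ∨
      α ((elC p) ^ 2) = ((elC p) ^ (2 * L))⁻¹ := by
    rcases hmem with h | h
    · left; rw [← sqAC, map_pow, h, sqB]
    · right
      simp only [Set.mem_singleton_iff] at h
      rw [← sqAC, map_pow, h, sqB']
  have hAC : α (elC p) = (elC p) ^ L ∨ α (elC p) = ((elC p) ^ L)⁻¹ := by
    rcases key with h | h
    · left
      calc α (elC p) = (α ((elC p) ^ 2)) ^ ((p + 1) / 2) := by
            rw [← map_pow, ← hCk]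
        _ = (elC p) ^ L := by rw [h, hpowL]
    · right
      calc α (elC p) = (α ((elC p) ^ 2)) ^ ((p + 1) / 2) := by
            rw [← map_pow, ← hCk]
        _ = ((elC p) ^ L)⁻¹ := by rw [h, inv_pow, hpowL]
  have h2C : α (α (elC p)) = (elC p) ^ (L * L) := by
    rcases hAC with h | h
    · rw [h, map_pow, h, ← pow_mul]
    · rw [h, map_inv, map_pow, h, ← inv_pow, inv_inv, ← pow_mul]
  have hfix : α (α (elC p)) = elC p := by
    have := congrArg (fun β : MulAut _ => β (elC p)) hα
    simpa [pow_two] using this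
  rw [hfix, cpow] at h2C
  have hz : ((L * L : ℕ) : ZMod p) = 1 := by
    have := congrArg Prod.snd h2C
    simpa [elC] using this.symm
  have hll : (l : ZMod p) * (l : ZMod p) = 1 := by
    push_cast at hz
    rwa [hLdef, ZMod.natCast_val, ZMod.cast_id] at hz
  have hl2 : l ^ 2 = 1 := by
    ext
    push_cast
    rw [pow_two]; exact hll
  have := orderOf_dvd_of_pow_eq_one hl2
  rw [hl] at this
  omega
end

section
/- For every integer n ≥ 2, the graph X(n,2) (with vertex set {x_k^r : k ∈ ℤ_{2n}, r ∈ ℤ₂} and adjacencies x_{2i}^r ∼ x_{2i+1}^r and x_{2i+1}^r ∼ x_{2i+2}^s for all i ∈ ℤ_n, r,s ∈ ℤ₂) is a vertex-transitive Cayley graph: its automorphism group contains a subgroup isomorphic to the dihedral group D_{4n} acting regularly on the 4n vertices. -/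
def Xn2 (n : ℕ) : SimpleGraph (ZMod (2 * n) × ZMod 2) :=
  SimpleGraph.fromRel (fun u v => v.1 = u.1 + 1 ∧ (u.1.val % 2 = 0 → v.2 = u.2))

namespace Xn2Aux

variable (n : ℕ)

/-- parity-change indicator -/
def cf (i : ZMod (2*n)) : ZMod 2 := if i.val < n then 0 else 1

/-- cocycle -/
def ff (k : ZMod (2*n)) : ZMod 2 := if k = 0 ∨ k = 1 then 1 else 0

def emap : DihedralGroup (2*n) → ZMod (2*n) × ZMod 2
  | .r i => (2*i + 2, cf n i)
  | .sr i => (1 - 2*i, cf n i)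

def tau (u : ZMod (2*n) × ZMod 2) : ZMod (2*n) × ZMod 2 := (u.1 + 2, u.2 + ff n u.1)

def gam (u : ZMod (2*n) × ZMod 2) : ZMod (2*n) × ZMod 2 := (3 - u.1, u.2)

variable {n}

section basic
variable (hn : 2 ≤ n)
include hn

lemma nz : NeZero (2*n) := ⟨by omega⟩

lemma castlt {v : ℕ} (hv : v < 2*n) : ((v : ZMod (2*n))).val = v := by
  rw [ZMod.val_natCast, Nat.mod_eq_of_lt hv]

lemma cast_inj {v w : ℕ} (hv : v < 2*n) (hw : w < 2*n) :
    ((v : ZMod (2*n)) = (w : ZMod (2*n))) ↔ v = w := by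
  constructor
  · intro h
    have := congrArg ZMod.val h
    rwa [castlt hn hv, castlt hn hw] at this
  · intro h; rw [h]

lemma val_self (i : ZMod (2*n)) : ((i.val : ℕ) : ZMod (2*n)) = i := by
  haveI := nz hn
  rw [ZMod.natCast_val, ZMod.cast_id]

lemma val_lt (i : ZMod (2*n)) : i.val < 2*n := by
  haveI := nz hn
  exact ZMod.val_lt i

lemma mod_two (v : ℕ) : ((v : ZMod (2*n))).val % 2 = v % 2 := by
  rw [ZMod.val_natCast]
  exact Nat.mod_mod_of_dvd _ ⟨n, rfl⟩

lemma cast_eq_sub {a v : ℕ} (h : v ≤ a) :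
    ((a - v : ℕ) : ZMod (2*n)) = (a : ZMod (2*n)) - (v : ZMod (2*n)) := by
  have : (a - v) + v = a := by omega
  have := congrArg (fun x : ℕ => (x : ZMod (2*n))) this
  push_cast at this
  linear_combination this

lemma cf_cast {v : ℕ} (hv : v < 2*n) : cf n (v : ZMod (2*n)) = if v < n then 0 else 1 := by
  rw [cf, castlt hn hv]

lemma ff_cast {v : ℕ} (hv : v < 2*n) : ff n (v : ZMod (2*n)) = if v = 0 ∨ v = 1 then 1 else 0 := by
  rw [ff]
  have h0 : ((v : ZMod (2*n)) = 0) ↔ v = 0 := by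
    simpa using cast_inj hn hv (by omega : 0 < 2*n)
  have h1 : ((v : ZMod (2*n)) = 1) ↔ v = 1 := by
    simpa using cast_inj hn hv (by omega : 1 < 2*n)
  simp only [h0, h1]

end basic


section cocycle
variable (hn : 2 ≤ n)
include hn

lemma parity_add_two (k : ZMod (2*n)) : (k + 2).val % 2 = k.val % 2 := by
  have hk := val_self hn k
  have : k + 2 = ((k.val + 2 : ℕ) : ZMod (2*n)) := by push_cast [hk]; ring
  rw [this, mod_two hn]
  omega

lemma h2n' : (n : ZMod (2*n)) * 2 = 0 := by
  have := ZMod.natCast_self (2*n)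
  push_cast at this
  linear_combination this

lemma parity_two_sub (k : ZMod (2*n)) : ((2 : ZMod (2*n)) - k).val % 2 = k.val % 2 := by
  have hk := val_self hn k
  have hlt := val_lt hn k
  have h2n := h2n' hn
  have h := congrArg (fun x : ℕ => (x : ZMod (2*n)))
    (show (2*n + 2 - k.val : ℕ) + k.val = 2*n + 2 by omega)
  push_cast [hk] at h
  have : (2 : ZMod (2*n)) - k = ((2*n + 2 - k.val : ℕ) : ZMod (2*n)) := by
    linear_combination -h - h2n
  rw [this, mod_two hn]
  omega

lemma ffstep {k : ZMod (2*n)} (hk : k.val % 2 = 0) : ff n (k + 1) = ff n k := by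
  have hks := val_self hn k
  have hlt := val_lt hn k
  set v := k.val with hv
  have hv2 : v + 1 < 2*n := by omega
  have h1 : k + 1 = ((v + 1 : ℕ) : ZMod (2*n)) := by push_cast [hks]; ring
  rw [h1, ff_cast hn hv2, ← hks, ff_cast hn hlt]
  have : ¬ (v + 1 = 0) := by omega
  have h2 : (v + 1 = 0 ∨ v + 1 = 1) ↔ (v = 0 ∨ v = 1) := by omega
  rw [if_congr h2 rfl rfl]

lemma LA (i : ZMod (2*n)) : cf n (i + 1) = cf n i + ff n (2*i + 2) := by
  have his := val_self hn i
  have hlt := val_lt hn i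
  set v := i.val with hv
  rw [← his]
  rcases Nat.lt_or_ge v (n-1) with h | h
  · -- v ≤ n - 2
    have e1 : (v : ZMod (2*n)) + 1 = ((v+1 : ℕ) : ZMod (2*n)) := by push_cast; ring
    have e2 : 2*(v : ZMod (2*n)) + 2 = ((2*v+2 : ℕ) : ZMod (2*n)) := by push_cast; ring
    rw [e1, e2, cf_cast hn (by omega), cf_cast hn (by omega), ff_cast hn (by omega)]
    simp only [if_pos (by omega : v + 1 < n), if_pos (by omega : v < n),
      if_neg (by omega : ¬(2*v+2 = 0 ∨ 2*v+2 = 1))]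
    decide
  rcases Nat.eq_or_lt_of_le h with h' | h'
  · -- v = n - 1
    have hv1 : v = n - 1 := h'.symm
    have e1 : (v : ZMod (2*n)) + 1 = ((n : ℕ) : ZMod (2*n)) := by
      have : v + 1 = n := by omega
      rw [← this]; push_cast; ring
    have e2 : 2*(v : ZMod (2*n)) + 2 = ((0 : ℕ) : ZMod (2*n)) := by
      have h2 : ((2*n : ℕ) : ZMod (2*n)) = 0 := ZMod.natCast_self _
      have : (2*v+2 : ℕ) = 2*n := by omega
      have e3 : 2*(v : ZMod (2*n)) + 2 = ((2*v+2 : ℕ) : ZMod (2*n)) := by push_cast; ring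
      rw [e3, this, h2]; simp
    rw [e1, e2, cf_cast hn (by omega), cf_cast hn (by omega), ff_cast hn (by omega)]
    simp only [if_neg (by omega : ¬ n < n), if_pos (by omega : v < n),
      if_pos (by omega : (0:ℕ) = 0 ∨ (0:ℕ) = 1)]
    decide
  rcases Nat.lt_or_ge v (2*n - 1) with h2 | h2
  · -- n ≤ v ≤ 2n - 2
    have e1 : (v : ZMod (2*n)) + 1 = ((v+1 : ℕ) : ZMod (2*n)) := by push_cast; ring
    have e2 : 2*(v : ZMod (2*n)) + 2 = ((2*v+2-2*n : ℕ) : ZMod (2*n)) := by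
      have h2n := h2n' hn
      have h := congrArg (fun x : ℕ => (x : ZMod (2*n)))
        (show (2*v+2-2*n : ℕ) + 2*n = 2*v+2 by omega)
      push_cast at h
      linear_combination h2n - h
    rw [e1, e2, cf_cast hn (by omega), cf_cast hn (by omega), ff_cast hn (by omega)]
    simp only [if_neg (by omega : ¬ v + 1 < n), if_neg (by omega : ¬ v < n),
      if_neg (by omega : ¬(2*v+2-2*n = 0 ∨ 2*v+2-2*n = 1))]
    decide
  · -- v = 2n - 1
    have hv1 : v = 2*n - 1 := by omega
    have e1 : (v : ZMod (2*n)) + 1 = ((0 : ℕ) : ZMod (2*n)) := by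
      have h3 : ((2*n : ℕ) : ZMod (2*n)) = 0 := ZMod.natCast_self _
      have : (v+1 : ℕ) = 2*n := by omega
      have e3 : (v : ZMod (2*n)) + 1 = ((v+1 : ℕ) : ZMod (2*n)) := by push_cast; ring
      rw [e3, this, h3]; simp
    have e2 : 2*(v : ZMod (2*n)) + 2 = ((0 : ℕ) : ZMod (2*n)) := by
      have h3 : ((2*n : ℕ) : ZMod (2*n)) = 0 := ZMod.natCast_self _
      have : (2*v+2 : ℕ) = 2*(2*n) := by omega
      have e3 : 2*(v : ZMod (2*n)) + 2 = ((2*v+2 : ℕ) : ZMod (2*n)) := by push_cast; ring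
      rw [e3, this]; push_cast [h3]; ring
    rw [e1, e2, cf_cast hn (by omega), cf_cast hn (by omega), ff_cast hn (by omega)]
    simp only [if_pos (by omega : (0:ℕ) < n), if_neg (by omega : ¬ v < n),
      if_pos (by omega : (0:ℕ) = 0 ∨ (0:ℕ) = 1)]
    decide

lemma LB (i : ZMod (2*n)) : cf n (i - 1) = cf n i + ff n (1 - 2*i) := by
  have his := val_self hn i
  have hlt := val_lt hn i
  set v := i.val with hv
  rw [← his]
  have h2n := h2n' hn
  rcases Nat.eq_or_lt_of_le (Nat.zero_le v) with h0 | h0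
  · -- v = 0
    have hv0 : v = 0 := h0.symm
    have hv' : (v : ZMod (2*n)) = 0 := by rw [hv0]; simp
    have e1 : (v : ZMod (2*n)) - 1 = ((2*n - 1 : ℕ) : ZMod (2*n)) := by
      have h := congrArg (fun x : ℕ => (x : ZMod (2*n)))
        (show (2*n-1 : ℕ) + 1 = 2*n by omega)
      push_cast at h
      linear_combination hv' - h - h2n
    have e2 : 1 - 2*(v : ZMod (2*n)) = ((1 : ℕ) : ZMod (2*n)) := by
      push_cast
      linear_combination -2*hv'
    rw [e1, e2, cf_cast hn (by omega), cf_cast hn (by omega), ff_cast hn (by omega)]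
    simp only [if_neg (by omega : ¬ 2*n-1 < n), if_pos (by omega : v < n),
      if_pos (by omega : (1:ℕ) = 0 ∨ (1:ℕ) = 1)]
    decide
  rcases Nat.lt_or_ge v n with h1 | h1
  · -- 1 ≤ v ≤ n - 1
    have e1 : (v : ZMod (2*n)) - 1 = ((v - 1 : ℕ) : ZMod (2*n)) := by
      have h := congrArg (fun x : ℕ => (x : ZMod (2*n)))
        (show (v-1 : ℕ) + 1 = v by omega)
      push_cast at h
      linear_combination -h
    have e2 : 1 - 2*(v : ZMod (2*n)) = ((2*n + 1 - 2*v : ℕ) : ZMod (2*n)) := by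
      have h := congrArg (fun x : ℕ => (x : ZMod (2*n)))
        (show (2*n+1-2*v : ℕ) + 2*v = 2*n + 1 by omega)
      push_cast at h
      linear_combination -h - h2n
    rw [e1, e2, cf_cast hn (by omega), cf_cast hn (by omega), ff_cast hn (by omega)]
    simp only [if_pos (by omega : v - 1 < n), if_pos (by omega : v < n),
      if_neg (by omega : ¬(2*n+1-2*v = 0 ∨ 2*n+1-2*v = 1))]
    decide
  rcases Nat.eq_or_lt_of_le h1 with h2 | h2
  · -- v = n
    have hvn : v = n := h2.symm
    have e1 : (v : ZMod (2*n)) - 1 = ((v - 1 : ℕ) : ZMod (2*n)) := by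
      have h := congrArg (fun x : ℕ => (x : ZMod (2*n)))
        (show (v-1 : ℕ) + 1 = v by omega)
      push_cast at h
      linear_combination -h
    have hv' : (v : ZMod (2*n)) = (n : ZMod (2*n)) := by rw [hvn]
    have e2 : 1 - 2*(v : ZMod (2*n)) = ((1 : ℕ) : ZMod (2*n)) := by
      push_cast
      linear_combination -2*hv' - h2n
    rw [e1, e2, cf_cast hn (by omega), cf_cast hn (by omega), ff_cast hn (by omega)]
    simp only [if_pos (by omega : v - 1 < n), if_neg (by omega : ¬ v < n),
      if_pos (by omega : (1:ℕ) = 0 ∨ (1:ℕ) = 1)]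
    decide
  · -- n + 1 ≤ v ≤ 2n - 1
    have e1 : (v : ZMod (2*n)) - 1 = ((v - 1 : ℕ) : ZMod (2*n)) := by
      have h := congrArg (fun x : ℕ => (x : ZMod (2*n)))
        (show (v-1 : ℕ) + 1 = v by omega)
      push_cast at h
      linear_combination -h
    have e2 : 1 - 2*(v : ZMod (2*n)) = ((4*n + 1 - 2*v : ℕ) : ZMod (2*n)) := by
      have h := congrArg (fun x : ℕ => (x : ZMod (2*n)))
        (show (4*n+1-2*v : ℕ) + 2*v = 4*n + 1 by omega)
      push_cast at h
      linear_combination -h - 2*h2n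
    rw [e1, e2, cf_cast hn (by omega), cf_cast hn (by omega), ff_cast hn (by omega)]
    simp only [if_neg (by omega : ¬ v - 1 < n), if_neg (by omega : ¬ v < n),
      if_neg (by omega : ¬(4*n+1-2*v = 0 ∨ 4*n+1-2*v = 1))]
    decide

end cocycle

section adj
variable (hn : 2 ≤ n)

def relx (u v : ZMod (2*n) × ZMod 2) : Prop :=
  v.1 = u.1 + 1 ∧ (u.1.val % 2 = 0 → v.2 = u.2)

lemma adj_iff (u v : ZMod (2*n) × ZMod 2) :
    (Xn2 n).Adj u v ↔ u ≠ v ∧ (relx u v ∨ relx v u) := by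
  rw [Xn2, SimpleGraph.fromRel_adj]
  rfl

include hn

lemma rel_tau (u v : ZMod (2*n) × ZMod 2) : relx (tau n u) (tau n v) ↔ relx u v := by
  unfold relx tau
  dsimp only
  constructor
  · rintro ⟨h1, h2⟩
    have h1' : v.1 = u.1 + 1 := by
      have h : v.1 + 2 = (u.1 + 1) + 2 := by rw [h1]; ring
      exact add_right_cancel h
    refine ⟨h1', fun he => ?_⟩
    have h2' := h2 (by rw [parity_add_two hn]; exact he)
    rwa [h1', ffstep hn he, add_left_inj] at h2'
  · rintro ⟨h1, h2⟩
    refine ⟨by rw [h1]; ring, fun he => ?_⟩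
    have he' : u.1.val % 2 = 0 := by rw [← parity_add_two hn]; exact he
    rw [h1, ffstep hn he', h2 he']

lemma tau_inj : Function.Injective (tau n) := by
  intro u v h
  unfold tau at h
  have h1 : u.1 + 2 = v.1 + 2 := congrArg Prod.fst h
  have h1' : u.1 = v.1 := add_right_cancel h1
  have h2 : u.2 + ff n u.1 = v.2 + ff n v.1 := congrArg Prod.snd h
  rw [h1', add_left_inj] at h2
  exact Prod.ext h1' h2

lemma adj_tau (u v : ZMod (2*n) × ZMod 2) :
    (Xn2 n).Adj (tau n u) (tau n v) ↔ (Xn2 n).Adj u v := by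
  rw [adj_iff, adj_iff, rel_tau hn, rel_tau hn, ne_eq, ne_eq, (tau_inj hn).eq_iff]

lemma rel_gam (u v : ZMod (2*n) × ZMod 2) : relx (gam n u) (gam n v) ↔ relx v u := by
  unfold relx gam
  dsimp only
  constructor
  · rintro ⟨h1, h2⟩
    have h1' : u.1 = v.1 + 1 := by linear_combination h1
    refine ⟨h1', fun he => ?_⟩
    refine (h2 ?_).symm
    have : 3 - u.1 = (2 : ZMod (2*n)) - v.1 := by rw [h1']; ring
    rw [this, parity_two_sub hn]
    exact he
  · rintro ⟨h1, h2⟩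
    have h1' : 3 - v.1 = 3 - u.1 + 1 := by linear_combination h1
    refine ⟨h1', fun he => ?_⟩
    refine (h2 ?_).symm
    have h3 : 3 - u.1 = (2 : ZMod (2*n)) - v.1 := by rw [h1]; ring
    rw [h3, parity_two_sub hn] at he
    exact he

lemma gam_inj : Function.Injective (gam n) := by
  intro u v h
  unfold gam at h
  have h1 : (3 : ZMod (2*n)) - u.1 = 3 - v.1 := congrArg Prod.fst h
  have h1' : u.1 = v.1 := by linear_combination -h1
  have h2 := congrArg Prod.snd h
  exact Prod.ext h1' h2

lemma adj_gam (u v : ZMod (2*n) × ZMod 2) :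
    (Xn2 n).Adj (gam n u) (gam n v) ↔ (Xn2 n).Adj u v := by
  rw [adj_iff, adj_iff, rel_gam hn, rel_gam hn, ne_eq, ne_eq, (gam_inj hn).eq_iff, or_comm]

end adj

section compat
variable (hn : 2 ≤ n)
include hn

open DihedralGroup in
lemma emap_r_one (x : DihedralGroup (2*n)) :
    emap n (r 1 * x) = tau n (emap n x) := by
  cases x with
  | r i =>
    rw [r_mul_r]
    show (2*(1 + i) + 2, cf n (1 + i)) = (2*i + 2 + 2, cf n i + ff n (2*i + 2))
    refine Prod.ext (by ring) ?_
    rw [add_comm 1 i]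
    exact LA hn i
  | sr i =>
    rw [r_mul_sr]
    show (1 - 2*(i - 1), cf n (i - 1)) = (1 - 2*i + 2, cf n i + ff n (1 - 2*i))
    exact Prod.ext (by ring) (LB hn i)

open DihedralGroup in
lemma emap_sr_zero (x : DihedralGroup (2*n)) :
    emap n (sr 0 * x) = gam n (emap n x) := by
  cases x with
  | r i =>
    rw [sr_mul_r]
    show (1 - 2*(0 + i), cf n (0 + i)) = (3 - (2*i + 2), cf n i)
    refine Prod.ext (by ring) (by rw [zero_add])
  | sr i =>
    rw [sr_mul_sr]
    show (2*(i - 0) + 2, cf n (i - 0)) = (3 - (1 - 2*i), cf n i)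
    refine Prod.ext (by ring) (by rw [sub_zero])

end compat

section bij
variable (hn : 2 ≤ n)
include hn

lemma two_mul_inj {i j : ZMod (2*n)} (h : 2*i = 2*j) (hc : cf n i = cf n j) : i = j := by
  have his := val_self hn i
  have hjs := val_self hn j
  have hiv := val_lt hn i
  have hjv := val_lt hn j
  have h2n := h2n' hn
  set v := i.val
  set w := j.val
  rw [← his, ← hjs] at h hc
  rw [cf_cast hn hiv, cf_cast hn hjv] at hc
  have hvw : v < n ↔ w < n := by
    by_cases h1 : v < n <;> by_cases h2 : w < n <;>
      simp only [if_pos, if_neg, h1, h2, if_true, if_false] at hc <;> first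
      | tauto
      | exact absurd hc (by decide)
      | exact absurd hc.symm (by decide)
  rw [← his, ← hjs]
  rcases Nat.lt_or_ge v n with h1 | h1
  · have h2 : w < n := hvw.mp h1
    have e1 : 2*(v : ZMod (2*n)) = ((2*v : ℕ) : ZMod (2*n)) := by push_cast; ring
    have e2 : 2*(w : ZMod (2*n)) = ((2*w : ℕ) : ZMod (2*n)) := by push_cast; ring
    rw [e1, e2, cast_inj hn (by omega) (by omega)] at h
    rw [cast_inj hn hiv hjv]
    omega
  · have h2 : n ≤ w := by omega
    have e1 : 2*(v : ZMod (2*n)) = ((2*v - 2*n : ℕ) : ZMod (2*n)) := by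
      have hq := congrArg (fun x : ℕ => (x : ZMod (2*n)))
        (show (2*v - 2*n : ℕ) + 2*n = 2*v by omega)
      push_cast at hq
      linear_combination h2n - hq
    have e2 : 2*(w : ZMod (2*n)) = ((2*w - 2*n : ℕ) : ZMod (2*n)) := by
      have hq := congrArg (fun x : ℕ => (x : ZMod (2*n)))
        (show (2*w - 2*n : ℕ) + 2*n = 2*w by omega)
      push_cast at hq
      linear_combination h2n - hq
    rw [e1, e2, cast_inj hn (by omega) (by omega)] at h
    rw [cast_inj hn hiv hjv]
    omega

lemma parity_fst_r (i : ZMod (2*n)) : (2*i + 2).val % 2 = 0 := by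
  have his := val_self hn i
  have e1 : 2*i + 2 = ((2*i.val + 2 : ℕ) : ZMod (2*n)) := by push_cast [his]; ring
  rw [e1, mod_two hn]
  omega

lemma parity_fst_sr (i : ZMod (2*n)) : (1 - 2*i).val % 2 = 1 := by
  have his := val_self hn i
  have hiv := val_lt hn i
  have h2n := h2n' hn
  have hq := congrArg (fun x : ℕ => (x : ZMod (2*n)))
    (show (4*n + 1 - 2*i.val : ℕ) + 2*i.val = 4*n + 1 by omega)
  push_cast at hq
  have e1 : 1 - 2*i = ((4*n + 1 - 2*i.val : ℕ) : ZMod (2*n)) := by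
    linear_combination -hq + 2*his - 2*h2n
  rw [e1, mod_two hn]
  omega

lemma emap_injective : Function.Injective (emap n) := by
  intro x y h
  cases x with
  | r i =>
    cases y with
    | r j =>
      have h1 : 2*i + 2 = 2*j + 2 := congrArg Prod.fst h
      have h2 : cf n i = cf n j := congrArg Prod.snd h
      have h1' : 2*i = 2*j := by linear_combination h1
      rw [two_mul_inj hn h1' h2]
    | sr j =>
      exfalso
      have h1 : 2*i + 2 = 1 - 2*j := congrArg Prod.fst h
      have := parity_fst_r hn i
      rw [h1, parity_fst_sr hn j] at this
      omega
  | sr i =>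
    cases y with
    | r j =>
      exfalso
      have h1 : 1 - 2*i = 2*j + 2 := congrArg Prod.fst h
      have := parity_fst_sr hn i
      rw [h1, parity_fst_r hn j] at this
      omega
    | sr j =>
      have h1 : 1 - 2*i = 1 - 2*j := congrArg Prod.fst h
      have h2 : cf n i = cf n j := congrArg Prod.snd h
      have h1' : 2*i = 2*j := by linear_combination -h1
      rw [two_mul_inj hn h1' h2]

lemma emap_bijective : Function.Bijective (emap n) := by
  haveI : NeZero (2*n) := nz hn
  rw [Fintype.bijective_iff_injective_and_card]
  refine ⟨emap_injective hn, ?_⟩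
  simp [DihedralGroup.card, ZMod.card]
  ring

end bij
open DihedralGroup in
def H (n : ℕ) : Subgroup (DihedralGroup (2*n)) where
  carrier := {g | ∀ x y, (Xn2 n).Adj (emap n (g * x)) (emap n (g * y)) ↔
      (Xn2 n).Adj (emap n x) (emap n y)}
  one_mem' := by intro x y; simp
  mul_mem' := by
    intro a b ha hb x y
    simp only [Set.mem_setOf_eq] at ha hb
    rw [mul_assoc, mul_assoc, ha, hb]
  inv_mem' := by
    intro a ha x y
    simp only [Set.mem_setOf_eq] at ha ⊢
    rw [← ha (a⁻¹ * x) (a⁻¹ * y), mul_inv_cancel_left, mul_inv_cancel_left]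

section main
variable (hn : 2 ≤ n)
include hn

open DihedralGroup in
lemma r_one_mem : r 1 ∈ H n := by
  intro x y
  rw [emap_r_one hn, emap_r_one hn, adj_tau hn]

open DihedralGroup in
lemma sr_zero_mem : sr 0 ∈ H n := by
  intro x y
  rw [emap_sr_zero hn, emap_sr_zero hn, adj_gam hn]

open DihedralGroup in
lemma key (g x y : DihedralGroup (2*n)) :
    (Xn2 n).Adj (emap n (g * x)) (emap n (g * y)) ↔
      (Xn2 n).Adj (emap n x) (emap n y) := by
  have hg : g ∈ H n := by
    have hr : ∀ i : ZMod (2*n), r i ∈ H n := by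
      intro i
      have : (r i : DihedralGroup (2*n)) = r 1 ^ i.val := by
        rw [r_one_pow, val_self hn]
      rw [this]
      exact pow_mem (r_one_mem hn) _
    cases g with
    | r i => exact hr i
    | sr i =>
      have : (sr i : DihedralGroup (2*n)) = sr 0 * r i := by
        rw [sr_mul_r, zero_add]
      rw [this]
      exact mul_mem (sr_zero_mem hn) (hr i)
  exact hg x y

noncomputable def eqv : DihedralGroup (2*n) ≃ (ZMod (2*n) × ZMod 2) :=
  Equiv.ofBijective _ (emap_bijective hn)

lemma eqv_apply (x : DihedralGroup (2*n)) : eqv hn x = emap n x := rfl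

noncomputable def phi : DihedralGroup (2*n) →* (Xn2 n ≃g Xn2 n) where
  toFun g :=
    { toEquiv := (eqv hn).symm.trans ((Equiv.mulLeft g).trans (eqv hn))
      map_rel_iff' := by
        intro u v
        have h := key hn g ((eqv hn).symm u) ((eqv hn).symm v)
        rw [← eqv_apply hn, ← eqv_apply hn, ← eqv_apply hn, ← eqv_apply hn,
          Equiv.apply_symm_apply, Equiv.apply_symm_apply] at h
        simpa using h }
  map_one' := by
    apply RelIso.ext
    intro v
    show eqv hn ((1 : DihedralGroup (2*n)) * (eqv hn).symm v) = v
    rw [one_mul, Equiv.apply_symm_apply]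
  map_mul' := by
    intro g h
    apply RelIso.ext
    intro v
    show eqv hn (g * h * (eqv hn).symm v)
        = eqv hn (g * (eqv hn).symm (eqv hn (h * (eqv hn).symm v)))
    rw [Equiv.symm_apply_apply, mul_assoc]

lemma phi_apply (g : DihedralGroup (2*n)) (u : ZMod (2*n) × ZMod 2) :
    phi hn g u = eqv hn (g * (eqv hn).symm u) := rfl

end main
end Xn2Aux

theorem Xn2_has_regular_dihedral_subgroup (n : ℕ) (hn : 2 ≤ n) :
    ∃ φ : DihedralGroup (2 * n) →* (Xn2 n ≃g Xn2 n),
      Function.Injective φ ∧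
      ∀ u v : ZMod (2 * n) × ZMod 2, ∃! g : DihedralGroup (2 * n), (φ g) u = v := by
  refine ⟨Xn2Aux.phi hn, ?_, ?_⟩
  · intro g g' h
    have h1 := congrArg (fun ψ : Xn2 n ≃g Xn2 n => ψ (Xn2Aux.eqv hn 1)) h
    simp only [Xn2Aux.phi_apply, Equiv.symm_apply_apply, mul_one] at h1
    exact (Xn2Aux.eqv hn).injective h1
  · intro u v
    refine ⟨(Xn2Aux.eqv hn).symm v * ((Xn2Aux.eqv hn).symm u)⁻¹, ?_, ?_⟩
    · show (Xn2Aux.phi hn) ((Xn2Aux.eqv hn).symm v * ((Xn2Aux.eqv hn).symm u)⁻¹) u = v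
      rw [Xn2Aux.phi_apply, inv_mul_cancel_right, Equiv.apply_symm_apply]
    · intro g hg
      rw [Xn2Aux.phi_apply] at hg
      have h2 : g * (Xn2Aux.eqv hn).symm u = (Xn2Aux.eqv hn).symm v := by
        have := congrArg (Xn2Aux.eqv hn).symm hg
        rwa [Equiv.symm_apply_apply] at this
      rw [← h2, mul_inv_cancel_right]
end
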